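/- arXiv:2409.16683 — 3 statements merged into one kernel-verified Lean document; each statement's English description precedes it below -/
import Mathlib

section
/- Let ξ_1, …, ξ_n be i.i.d. Bernoulli random variables with success probability μ = E(ξ_1). Then P((1/n)·∑_{i=1}^n ξ_i ≥ 1/2) ≤ 2·(e·μ)^{n·(1/2 − μ)²}. -/
/-!
Chernoff's bound with the tilt `t = log ((1 - m) / m)`, optimal for the threshold `n / 2`, gives
`P(∑ ξ_i ≥ n / 2) ≤ (4 m (1 - m)) ^ (n / 2)`. What remains is the elementary inequality
`4 m (1 - m) ≤ (e m) ^ (2 (1/2 - m)²)` for `0 < m < 1/e`; when `e m ≥ 1` the claimed bound exceeds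
`1`, and when `m = 0` the event is null.
-/

open MeasureTheory ProbabilityTheory Real Finset

theorem sum_range_pow_div_le_neg_log_one_sub {x : ℝ} (h₀ : 0 ≤ x) (h₁ : x < 1) (k : ℕ) :
    ∑ i ∈ range k, x ^ (i + 1) / (i + 1) ≤ -log (1 - x) :=
  sum_le_hasSum _ (fun i _ => by positivity)
    (hasSum_pow_div_log_of_abs_lt_one (by rwa [abs_of_nonneg h₀]))

theorem log_le_exp_one_mul_sub_two {m : ℝ} (hm : 0 < m) : log m ≤ exp 1 * m - 2 := by
  have h := log_le_sub_one_of_pos (mul_pos (exp_pos 1) hm)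
  rw [log_mul (exp_ne_zero 1) hm.ne', log_exp] at h
  linarith

theorem log_four_mul_mul_one_sub_le {m : ℝ} (hm : 0 < m) (hem : exp 1 * m < 1) :
    log (4 * m * (1 - m)) ≤ 2 * (1 / 2 - m) ^ 2 * log (exp 1 * m) := by
  have he : 2.71828 < exp 1 := lt_trans (by norm_num) exp_one_gt_d9
  have he' : exp 1 < 2.7183 := lt_trans exp_one_lt_d9 (by norm_num)
  have hm_le : m ≤ 0.36788 := by nlinarith
  -- `log m ≤ e m - 2` and `-log (1 - m) ≥ m + m²/2 + m³/3` reduce the claim to a cubic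
  -- inequality in `m` and `e`, which holds on `m ≤ 1/e`.
  have hlog_m := log_le_exp_one_mul_sub_two hm
  have hlog_one_sub := sum_range_pow_div_le_neg_log_one_sub hm.le (by linarith) 3
  norm_num [sum_range_succ] at hlog_one_sub
  have hlog4 : log 4 < 1.3863 := by
    rw [show (4:ℝ) = 2 ^ 2 by norm_num, log_pow]; have := log_two_lt_d9; push_cast; linarith
  have hB : 0 ≤ m / 2 + 2 * m ^ 2 - 2 * m ^ 3 := by nlinarith
  have hpoly : 0 ≤ (3 / 2 - 1.3863) + (3 * m - 3 / 2 * m ^ 2 + m ^ 3 / 3)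
      - exp 1 * (m / 2 + 2 * m ^ 2 - 2 * m ^ 3) := by
    nlinarith [mul_le_mul_of_nonneg_right he'.le hB, mul_nonneg hm.le (sub_nonneg.2 hm_le),
      mul_nonneg (mul_nonneg hm.le hm.le) (sub_nonneg.2 hm_le)]
  have hprod : 0 ≤ (1 / 2 + 2 * m - 2 * m ^ 2) * (exp 1 * m - 2 - log m) :=
    mul_nonneg (by nlinarith) (by linarith)
  rw [log_mul (by positivity) (by linarith), log_mul (by positivity) hm.ne',
    log_mul (exp_ne_zero 1) hm.ne', log_exp]
  linarith

theorem sqrt_four_mul_mul_one_sub_le_rpow {m : ℝ} (hm : 0 < m) (hem : exp 1 * m < 1) :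
    √(4 * m * (1 - m)) ≤ (exp 1 * m) ^ ((1 / 2 - m) ^ 2) := by
  have hm1 : m < 1 := by nlinarith [add_one_le_exp 1]
  rw [← log_le_log_iff (by positivity) (by positivity), log_sqrt (by nlinarith),
    log_rpow (by positivity)]
  linarith [log_four_mul_mul_one_sub_le hm hem]

section Bernoulli

variable {Ω ι : Type*} [MeasurableSpace Ω] {μ : Measure Ω}

theorem mgf_of_forall_eq_zero_or_eq_one [IsProbabilityMeasure μ] {X : Ω → ℝ} (hX : Measurable X)
    (h01 : ∀ ω, X ω = 0 ∨ X ω = 1) (t : ℝ) :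
    mgf X μ t = 1 - μ.real {ω | X ω = 1} + μ.real {ω | X ω = 1} * exp t := by
  have hA : MeasurableSet {ω | X ω = 1} := hX (measurableSet_singleton 1)
  have hexp : (fun ω => exp (t * X ω)) =
      fun ω => 1 + (exp t - 1) * {ω | X ω = 1}.indicator (fun _ => (1 : ℝ)) ω := by
    funext ω
    rcases h01 ω with h | h <;> simp [h]
  rw [mgf, hexp, integral_add (integrable_const _) (((integrable_const _).indicator hA).const_mul _),
    integral_const, integral_const_mul, integral_indicator_const _ hA]
  simp only [probReal_univ, smul_eq_mul]
  ring

theorem measureReal_le_sum_le_of_iIndepFun [Fintype ι] [IsProbabilityMeasure μ]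
    {ξ : ι → Ω → ℝ} (hmeas : ∀ i, Measurable (ξ i)) (h01 : ∀ i ω, ξ i ω = 0 ∨ ξ i ω = 1)
    (hindep : iIndepFun ξ μ) {m : ℝ} (hm : ∀ i, μ.real {ω | ξ i ω = 1} = m)
    {t : ℝ} (ht : 0 ≤ t) (a : ℝ) :
    μ.real {ω | a ≤ ∑ i, ξ i ω} ≤ exp (-t * a) * (1 - m + m * exp t) ^ Fintype.card ι := by
  have hint : ∀ i ∈ (univ : Finset ι), Integrable (fun ω => exp (t * ξ i ω)) μ := fun i _ =>
    integrable_exp_mul_of_le t 1 ht (hmeas i).aemeasurable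
      (ae_of_all _ fun ω => by rcases h01 i ω with h | h <;> simp [h])
  have hchernoff := measure_ge_le_exp_mul_mgf a ht (hindep.integrable_exp_mul_sum hmeas hint)
  simp only [hindep.mgf_sum hmeas, mgf_of_forall_eq_zero_or_eq_one (hmeas _) (h01 _), hm,
    prod_const, card_univ, Finset.sum_apply] at hchernoff
  exact hchernoff

theorem measureReal_card_div_two_le_sum_le [Fintype ι] [IsProbabilityMeasure μ]
    {ξ : ι → Ω → ℝ} (hmeas : ∀ i, Measurable (ξ i)) (h01 : ∀ i ω, ξ i ω = 0 ∨ ξ i ω = 1)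
    (hindep : iIndepFun ξ μ) {m : ℝ} (hm : ∀ i, μ.real {ω | ξ i ω = 1} = m)
    (hm0 : 0 < m) (hm1 : m ≤ 1 / 2) :
    μ.real {ω | (Fintype.card ι : ℝ) / 2 ≤ ∑ i, ξ i ω} ≤
      √(4 * m * (1 - m)) ^ Fintype.card ι := by
  set t := log ((1 - m) / m)
  have ht : 0 ≤ t := log_nonneg (by rw [le_div_iff₀ hm0]; linarith)
  have hexp_t : exp t = (1 - m) / m := exp_log (div_pos (by linarith) hm0)
  have hfactor : exp (-t / 2) * (1 - m + m * exp t) = √(4 * m * (1 - m)) := by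
    refine ((sqrt_eq_iff_mul_self_eq_of_pos
      (mul_pos (exp_pos _) (by nlinarith [exp_pos t]))).2 ?_).symm
    have hsq : exp (-t / 2) * exp (-t / 2) = m / (1 - m) := by
      rw [← exp_add, show -t / 2 + -t / 2 = -t by ring, exp_neg, hexp_t, inv_div]
    calc _ = exp (-t / 2) * exp (-t / 2) * (1 - m + m * exp t) ^ 2 := by ring
      _ = 4 * m * (1 - m) := by
        rw [hsq, hexp_t]
        field_simp
        ring
  calc μ.real {ω | (Fintype.card ι : ℝ) / 2 ≤ ∑ i, ξ i ω}
      ≤ exp (-t * (Fintype.card ι / 2)) * (1 - m + m * exp t) ^ Fintype.card ι :=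
        measureReal_le_sum_le_of_iIndepFun hmeas h01 hindep hm ht _
    _ = √(4 * m * (1 - m)) ^ Fintype.card ι := by
      rw [← hfactor, mul_pow, ← exp_nat_mul]
      ring_nf

theorem measure_le_sum_eq_zero [Fintype ι] {ξ : ι → Ω → ℝ}
    (h01 : ∀ i ω, ξ i ω = 0 ∨ ξ i ω = 1) (h0 : ∀ i, μ {ω | ξ i ω = 1} = 0) {a : ℝ} (ha : 0 < a) :
    μ {ω | a ≤ ∑ i, ξ i ω} = 0 := by
  refine measure_mono_null (fun ω hω => ?_) (measure_iUnion_null h0)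
  by_contra hω'
  simp only [Set.mem_iUnion, Set.mem_ofPred_eq, not_exists] at hω'
  have : ∑ i, ξ i ω = 0 := sum_eq_zero fun i _ => (h01 i ω).resolve_right (hω' i)
  exact absurd hω (by simp [this, ha])

end Bernoulli

theorem stmt6_general {Ω : Type*} [MeasurableSpace Ω] (μ : Measure Ω) [IsProbabilityMeasure μ]
    (n : ℕ) (hn : 0 < n) (ξ : Fin n → Ω → ℝ) (hmeas : ∀ i, Measurable (ξ i))
    (h01 : ∀ i ω, ξ i ω = 0 ∨ ξ i ω = 1)
    (hindep : iIndepFun ξ μ)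
    (m : ℝ) (hm : ∀ i, (μ {ω | ξ i ω = 1}).toReal = m) :
    (μ {ω | (1 / 2 : ℝ) ≤ (n : ℝ)⁻¹ * ∑ i, ξ i ω}).toReal ≤
      2 * (Real.exp 1 * m) ^ ((n : ℝ) * (1 / 2 - m) ^ 2) := by
  have hn' : (0 : ℝ) < n := by exact_mod_cast hn
  have hm0 : 0 ≤ m := hm ⟨0, hn⟩ ▸ ENNReal.toReal_nonneg
  have hevent : {ω | (1 / 2 : ℝ) ≤ (n : ℝ)⁻¹ * ∑ i, ξ i ω} = {ω | (n : ℝ) / 2 ≤ ∑ i, ξ i ω} := by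
    ext ω
    rw [Set.mem_ofPred_eq, Set.mem_ofPred_eq, inv_mul_eq_div, le_div_iff₀ hn',
      one_div_mul_eq_div]
  rw [hevent, ← measureReal_def]
  have hrpow : 0 ≤ (exp 1 * m) ^ ((n : ℝ) * (1 / 2 - m) ^ 2) := by positivity
  rcases le_or_gt 1 (exp 1 * m) with hem | hem
  · calc μ.real {ω | (n : ℝ) / 2 ≤ ∑ i, ξ i ω} ≤ 1 := measureReal_le_one
      _ ≤ (exp 1 * m) ^ ((n : ℝ) * (1 / 2 - m) ^ 2) := one_le_rpow hem (by positivity)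
      _ ≤ _ := by linarith
  rcases hm0.eq_or_lt with rfl | hm_pos
  · rw [measureReal_def, measure_le_sum_eq_zero h01 (fun i => (measureReal_eq_zero_iff).1 (hm i))
      (by positivity)]
    positivity
  have hm_half : m ≤ 1 / 2 := by nlinarith [add_one_le_exp 1]
  calc μ.real {ω | (n : ℝ) / 2 ≤ ∑ i, ξ i ω} ≤ √(4 * m * (1 - m)) ^ n := by
        simpa using measureReal_card_div_two_le_sum_le hmeas h01 hindep hm hm_pos hm_half
    _ ≤ ((exp 1 * m) ^ ((1 / 2 - m) ^ 2)) ^ n := by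
        gcongr
        exact sqrt_four_mul_mul_one_sub_le_rpow hm_pos hem
    _ = (exp 1 * m) ^ ((n : ℝ) * (1 / 2 - m) ^ 2) := by
        rw [← rpow_natCast, ← rpow_mul (by positivity), mul_comm ((1 / 2 - m) ^ 2)]
    _ ≤ _ := by linarith

/-- Kiefer's inequality: for i.i.d. Bernoulli random variables with success probability `m`,
`P((1/n)∑ ξ_i ≥ 1/2) ≤ 2 (e·m)^{n(1/2 − m)²}`. -/
theorem stmt6 {Ω : Type*} [MeasurableSpace Ω] (μ : Measure Ω) [IsProbabilityMeasure μ]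
    (n : ℕ) (hn : 0 < n) (ξ : Fin n → Ω → ℝ) (hmeas : ∀ i, Measurable (ξ i))
    (h01 : ∀ i ω, ξ i ω = 0 ∨ ξ i ω = 1)
    (hindep : iIndepFun ξ μ)
    (hident : ∀ i j, Measure.map (ξ i) μ = Measure.map (ξ j) μ)
    (m : ℝ) (hm : ∀ i, (μ {ω | ξ i ω = 1}).toReal = m) :
    (μ {ω | (1 / 2 : ℝ) ≤ (n : ℝ)⁻¹ * ∑ i, ξ i ω}).toReal ≤
      2 * (Real.exp 1 * m) ^ ((n : ℝ) * (1 / 2 - m) ^ 2) :=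
  stmt6_general μ n hn ξ hmeas h01 hindep m hm
end

section
/- Let R be a p × p correlation matrix whose entries are R_{ij} = ρ(|i − j|) for a function ρ: [0,∞) → [0,1] satisfying ρ(t) ≤ c·t^{−γ} for all t ≥ 1 and some constants c > 0, γ > 0. Then for any k ≤ p, the k × k leading principal submatrix R(k) satisfies ‖R(k)‖_F² ≤ C·k^{2−min(γ,1)/2} for a constant C depending only on c and γ. In particular, for the autoregressive case ρ(t) = r^t with fixed r ∈ (0,1), one has ‖R(k)‖_F² ≤ C·k. -/
/-!
Every row of the Toeplitz matrix `(f |i - j|)_{i,j<k}` is dominated by two copies of the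
sequence `f 0, …, f (k-1)`, so its entry sum is at most `2k ∑_{n<k} f n`. For `f = ρ²`, cut
this sequence at `√k`: the `√k + 1` head terms are at most `1`, and the tail terms are at most
`ρ ≤ c (√k)^(-γ) ≤ c k^(-α/2)` with `α = min γ 1`; together this is `O(k^(2 - α/2))`. For
`ρ t = r^t` the sequence is geometric, so the row sums are bounded and the total is `O(k)`.
-/

open Finset Real

theorem Finset.sum_comp_le_sum_of_injOn {ι κ : Type*} {s : Finset ι} {t : Finset κ}
    {f : κ → ℝ} {e : ι → κ} (he : Set.InjOn e s) (hst : ∀ i ∈ s, e i ∈ t)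
    (hf : ∀ x ∈ t, 0 ≤ f x) : ∑ i ∈ s, f (e i) ≤ ∑ x ∈ t, f x := by
  classical
  rw [← sum_image he]
  exact sum_le_sum_of_subset_of_nonneg (image_subset_iff.2 hst) fun x hx _ => hf x hx

theorem sum_fin_abs_sub_le {f : ℝ → ℝ} (hf : ∀ n : ℕ, 0 ≤ f n) {k : ℕ} (i : Fin k) :
    ∑ j : Fin k, f |(i : ℝ) - j| ≤ 2 * ∑ n ∈ range k, f n := by
  have hf' : ∀ n ∈ range k, 0 ≤ f n := fun n _ => hf n
  rw [← sum_filter_add_sum_filter_not univ (fun j : Fin k => j ≤ i), two_mul]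
  gcongr
  · calc ∑ j ∈ univ.filter (· ≤ i), f |(i : ℝ) - j|
        = ∑ j ∈ univ.filter (· ≤ i), f ((i - j : ℕ) : ℝ) := by
          refine sum_congr rfl fun j hj => ?_
          have hji : (j : ℕ) ≤ i := by simpa using hj
          rw [Nat.cast_sub hji, abs_of_nonneg (sub_nonneg.2 (by exact_mod_cast hji))]
      _ ≤ ∑ n ∈ range k, f n := by
          refine sum_comp_le_sum_of_injOn (fun a ha b hb hab => ?_) (fun j _ => ?_) hf'
          · simp only [coe_filter, mem_univ, true_and, Set.mem_ofPred_eq] at ha hb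
            have : (i : ℕ) - a = i - b := hab
            omega
          · simp only [mem_range]; omega
  · calc ∑ j ∈ univ.filter (¬ · ≤ i), f |(i : ℝ) - j|
        = ∑ j ∈ univ.filter (¬ · ≤ i), f ((j - i : ℕ) : ℝ) := by
          refine sum_congr rfl fun j hj => ?_
          have hij : (i : ℕ) ≤ j := by
            simp only [mem_filter, mem_univ, true_and, not_le] at hj; omega
          rw [abs_sub_comm, Nat.cast_sub hij, abs_of_nonneg (sub_nonneg.2 (by exact_mod_cast hij))]
      _ ≤ ∑ n ∈ range k, f n := by
          refine sum_comp_le_sum_of_injOn (fun a ha b hb hab => ?_) (fun j _ => ?_) hf'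
          · simp only [coe_filter, mem_univ, true_and, Set.mem_ofPred_eq] at ha hb
            have : (a : ℕ) - i = b - i := hab
            omega
          · simp only [mem_range]; omega

theorem sum_sum_fin_abs_sub_le {f : ℝ → ℝ} (hf : ∀ n : ℕ, 0 ≤ f n) (k : ℕ) :
    ∑ i : Fin k, ∑ j : Fin k, f |(i : ℝ) - j| ≤ 2 * k * ∑ n ∈ range k, f n :=
  calc ∑ i : Fin k, ∑ j : Fin k, f |(i : ℝ) - j|
      ≤ ∑ _i : Fin k, 2 * ∑ n ∈ range k, f n := sum_le_sum fun i _ => sum_fin_abs_sub_le hf i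
    _ = 2 * k * ∑ n ∈ range k, f n := by
        rw [sum_const, card_univ, Fintype.card_fin, nsmul_eq_mul, mul_left_comm, mul_assoc]

theorem sum_range_le_of_le_one_of_le {g : ℕ → ℝ} {s ε : ℝ} (hs : 0 ≤ s) (hε : 0 ≤ ε)
    (hg : ∀ n, g n ≤ 1) (hgε : ∀ n : ℕ, s < n → g n ≤ ε) (k : ℕ) :
    ∑ n ∈ range k, g n ≤ s + 1 + k * ε := by
  rw [← sum_filter_add_sum_filter_not (range k) (fun n : ℕ => (n : ℝ) ≤ s)]
  gcongr
  · have hcard : #((range k).filter fun n : ℕ => (n : ℝ) ≤ s) ≤ ⌊s⌋₊ + 1 := by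
      refine (card_le_card fun n hn => ?_).trans (card_range _).le
      simp only [mem_filter, mem_range] at hn ⊢
      exact Nat.lt_succ_of_le (Nat.le_floor hn.2)
    calc ∑ n ∈ (range k).filter (fun n : ℕ => (n : ℝ) ≤ s), g n
        ≤ #((range k).filter fun n : ℕ => (n : ℝ) ≤ s) := by
          simpa using sum_le_card_nsmul _ _ 1 fun n _ => hg n
      _ ≤ (⌊s⌋₊ + 1 : ℕ) := by exact_mod_cast hcard
      _ ≤ s + 1 := by push_cast; linarith [Nat.floor_le hs]
  · calc ∑ n ∈ (range k).filter (fun n : ℕ => ¬ (n : ℝ) ≤ s), g n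
        ≤ #((range k).filter fun n : ℕ => ¬ (n : ℝ) ≤ s) * ε := by
          simpa using sum_le_card_nsmul _ _ ε fun n hn => hgε n (not_le.1 (mem_filter.1 hn).2)
      _ ≤ k * ε := by
          gcongr
          exact_mod_cast (card_filter_le _ _).trans (card_range k).le

theorem rpow_neg_le_rpow_neg {s t α γ : ℝ} (hs : 1 ≤ s) (hst : s ≤ t) (hα : 0 ≤ α)
    (hαγ : α ≤ γ) : t ^ (-γ) ≤ s ^ (-α) :=
  (rpow_le_rpow_of_exponent_le (hs.trans hst) (neg_le_neg hαγ)).trans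
    (rpow_le_rpow_of_nonpos (zero_lt_one.trans_le hs) hst (neg_nonpos.2 hα))

theorem sum_sq_le_of_decay {c γ α : ℝ} (hc : 0 ≤ c) (hα : 0 ≤ α) (hα1 : α ≤ 1) (hαγ : α ≤ γ)
    {ρ : ℝ → ℝ} (hρ : ∀ t, 0 ≤ t → 0 ≤ ρ t ∧ ρ t ≤ 1) (hdecay : ∀ t, 1 ≤ t → ρ t ≤ c * t ^ (-γ))
    (k : ℕ) :
    ∑ i : Fin k, ∑ j : Fin k, ρ |(i : ℝ) - j| ^ 2 ≤ (2 * c + 4) * (k : ℝ) ^ (2 - α / 2) := by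
  rcases Nat.eq_zero_or_pos k with rfl | hk
  · simp only [univ_eq_empty, sum_empty, Nat.cast_zero]
    exact mul_nonneg (by linarith) (rpow_nonneg le_rfl _)
  set K : ℝ := (k : ℝ)
  have hK : 1 ≤ K := Nat.one_le_cast.2 hk
  have hK0 : 0 < K := by linarith
  have hs : 1 ≤ √K := one_le_sqrt.2 hK
  have hsq_le : ∀ n : ℕ, ρ n ^ 2 ≤ ρ n := fun n => by
    obtain ⟨h0, h1⟩ := hρ n n.cast_nonneg
    nlinarith
  have htail : ∀ n : ℕ, √K < n → ρ n ^ 2 ≤ c * K ^ (-(α / 2)) := fun n hn =>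
    calc ρ n ^ 2 ≤ c * (n : ℝ) ^ (-γ) := (hsq_le n).trans (hdecay n (hs.trans hn.le))
      _ ≤ c * √K ^ (-α) := by gcongr; exact rpow_neg_le_rpow_neg hs hn.le hα hαγ
      _ = c * K ^ (-(α / 2)) := by rw [sqrt_eq_rpow, ← rpow_mul hK0.le]; ring_nf
  have hhead : 2 * K * (√K + 1) ≤ 4 * K ^ (2 - α / 2) :=
    calc 2 * K * (√K + 1) ≤ 4 * (K * √K) := by nlinarith
      _ = 4 * K ^ ((3 : ℝ) / 2) := by
        rw [sqrt_eq_rpow, show (3 : ℝ) / 2 = 1 + 1 / 2 by norm_num, rpow_add hK0, rpow_one]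
      _ ≤ 4 * K ^ (2 - α / 2) := by gcongr; linarith
  have hbulk : K * K * K ^ (-(α / 2)) = K ^ (2 - α / 2) := by
    rw [sub_eq_add_neg, rpow_add hK0, show (2 : ℝ) = (2 : ℕ) by norm_num, rpow_natCast]
    ring
  calc ∑ i : Fin k, ∑ j : Fin k, ρ |(i : ℝ) - j| ^ 2
      ≤ 2 * K * ∑ n ∈ range k, ρ n ^ 2 :=
        sum_sum_fin_abs_sub_le (f := fun t => ρ t ^ 2) (fun n => sq_nonneg _) k
    _ ≤ 2 * K * (√K + 1 + K * (c * K ^ (-(α / 2)))) := by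
        gcongr
        exact sum_range_le_of_le_one_of_le (sqrt_nonneg K) (by positivity)
          (fun n => (hsq_le n).trans (hρ n n.cast_nonneg).2) htail k
    _ = 2 * K * (√K + 1) + 2 * c * (K * K * K ^ (-(α / 2))) := by ring
    _ ≤ (2 * c + 4) * K ^ (2 - α / 2) := by rw [hbulk]; linarith

theorem sum_sq_rpow_abs_sub_le {r : ℝ} (hr0 : 0 ≤ r) (hr1 : r < 1) (k : ℕ) :
    ∑ i : Fin k, ∑ j : Fin k, (r ^ |(i : ℝ) - j|) ^ 2 ≤ 2 * (1 - r ^ 2)⁻¹ * k := by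
  have hq1 : r ^ 2 < 1 := by nlinarith
  calc ∑ i : Fin k, ∑ j : Fin k, (r ^ |(i : ℝ) - j|) ^ 2
      ≤ 2 * k * ∑ n ∈ range k, (r ^ (n : ℝ)) ^ 2 :=
        sum_sum_fin_abs_sub_le (f := fun t => (r ^ t) ^ 2) (fun n => sq_nonneg _) k
    _ = 2 * k * ∑ n ∈ range k, (r ^ 2) ^ n := by
        congr 1; refine sum_congr rfl fun n _ => ?_
        rw [rpow_natCast, ← pow_mul, ← pow_mul, mul_comm]
    _ ≤ 2 * k * (1 - r ^ 2)⁻¹ := by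
        gcongr
        simpa [← range_eq_Ico] using geom_sum_Ico_le_of_lt_one (m := 0) (n := k) (sq_nonneg r) hq1
    _ = 2 * (1 - r ^ 2)⁻¹ * k := by ring

/-- Frobenius-norm bound for correlation matrices with a decaying correlation function:
if `R_{ij} = ρ(|i−j|)` with `ρ : [0,∞) → [0,1]`, `ρ(0) = 1` and `ρ(t) ≤ c t^{−γ}` for `t ≥ 1`,
then `‖R(k)‖_F² ≤ C k^{2 − min(γ,1)/2}` for a constant `C` depending only on `c, γ`.
In particular, in the autoregressive case `ρ(t) = r^t` with `r ∈ (0,1)`, `‖R(k)‖_F² ≤ C k`. -/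
theorem stmt7 (c γ : ℝ) (hc : 0 < c) (hγ : 0 < γ) :
    (∃ C > 0, ∀ ρ : ℝ → ℝ, ρ 0 = 1 → (∀ t : ℝ, 0 ≤ t → 0 ≤ ρ t ∧ ρ t ≤ 1) →
      (∀ t : ℝ, 1 ≤ t → ρ t ≤ c * t ^ (-γ)) →
      ∀ p k : ℕ, k ≤ p →
        ∑ i : Fin k, ∑ j : Fin k, (ρ |(i : ℝ) - (j : ℝ)|) ^ 2 ≤
          C * (k : ℝ) ^ (2 - min γ 1 / 2)) ∧
    (∀ r : ℝ, 0 < r → r < 1 → ∃ C > 0, ∀ p k : ℕ, k ≤ p →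
      ∑ i : Fin k, ∑ j : Fin k, (r ^ |(i : ℝ) - (j : ℝ)|) ^ 2 ≤ C * (k : ℝ)) := by
  refine ⟨⟨2 * c + 4, by linarith, fun ρ _ hρ hdecay _ k _ => ?_⟩,
    fun r hr0 hr1 => ⟨2 * (1 - r ^ 2)⁻¹, ?_, fun _ k _ => sum_sq_rpow_abs_sub_le hr0.le hr1 k⟩⟩
  · exact sum_sq_le_of_decay hc.le (lt_min hγ one_pos).le (min_le_right _ _) (min_le_left _ _)
      hρ hdecay k
  · have : 0 < 1 - r ^ 2 := by nlinarith
    positivity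
end

section
/- Let X, Y be real random variables with means μ_X = E(X), μ_Y = E(Y), satisfying ‖X − μ_X‖_{L^4} ≤ C·σ_X and ‖Y − μ_Y‖_{L^4} ≤ C·σ_Y where σ_X² = var(X), σ_Y² = var(Y). Let φ_t denote truncation at level t, with t_X = σ_X·√n and t_Y = σ_Y·√n. Then |cov(φ_{t_X}(X − μ_X), φ_{t_Y}(Y − μ_Y)) − cov(X, Y)| ≤ c·C⁴·σ_X·σ_Y/n for an absolute constant c > 0. -/
open MeasureTheory

/-! ### Helper lemmas -/

private lemma real_sign_mul_abs (u : ℝ) : Real.sign u * |u| = u := by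
  rcases lt_trichotomy u 0 with h | h | h
  · rw [Real.sign_of_neg h, abs_of_neg h]; ring
  · simp [h, Real.sign_zero]
  · rw [Real.sign_of_pos h, abs_of_pos h]; ring

private lemma abs_real_sign_le (u : ℝ) : |Real.sign u| ≤ 1 := by
  rcases Real.sign_apply_eq u with h | h | h <;> rw [h] <;> norm_num

private lemma measurable_real_sign : Measurable Real.sign := by
  have : Real.sign = fun r : ℝ => if r < 0 then (-1 : ℝ) else if 0 < r then 1 else 0 := by
    funext r; rfl
  rw [this]
  exact Measurable.ite (measurableSet_lt measurable_id measurable_const) measurable_const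
    (Measurable.ite (measurableSet_lt measurable_const measurable_id) measurable_const
      measurable_const)

/-- The truncation map. -/
noncomputable def phi (t u : ℝ) : ℝ := Real.sign u * min |u| t

private lemma measurable_phi (t : ℝ) : Measurable (phi t) :=
  measurable_real_sign.mul ((measurable_id.abs).min measurable_const)

private lemma abs_phi_le_abs (t u : ℝ) (ht : 0 ≤ t) : |phi t u| ≤ |u| := by
  have h : 0 ≤ min |u| t := le_min (abs_nonneg u) ht
  calc |phi t u| = |Real.sign u| * |min |u| t| := abs_mul _ _
    _ ≤ 1 * min |u| t := by
        rw [abs_of_nonneg h]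
        exact mul_le_mul_of_nonneg_right (abs_real_sign_le u) h
    _ = min |u| t := one_mul _
    _ ≤ |u| := min_le_left _ _

private lemma abs_phi_sub_le (t u : ℝ) (ht : 0 < t) :
    |phi t u - u| ≤ (2 / t ^ 2) * |u| ^ 3 := by
  rcases le_or_gt |u| t with h | h
  · have : phi t u = u := by rw [phi, min_eq_left h, real_sign_mul_abs]
    rw [this, sub_self, abs_zero]
    positivity
  · have hp : |phi t u| ≤ |u| := abs_phi_le_abs t u ht.le
    have h1 : |phi t u - u| ≤ 2 * |u| := by
      calc |phi t u - u| = |phi t u + -u| := by ring_nf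
        _ ≤ |phi t u| + |-u| := abs_add_le _ _
        _ = |phi t u| + |u| := by rw [abs_neg]
        _ ≤ 2 * |u| := by linarith
    have h2 : 2 * |u| ≤ (2 / t ^ 2) * |u| ^ 3 := by
      rw [div_mul_eq_mul_div, le_div_iff₀ (by positivity)]
      have h3 : t ^ 2 ≤ |u| ^ 2 := by nlinarith
      nlinarith [mul_nonneg (abs_nonneg u) (sub_nonneg.mpr h3)]
    linarith

private lemma young34 {x y : ℝ} (hx : 0 ≤ x) (hy : 0 ≤ y) :
    4 * (x ^ 3 * y) ≤ 3 * x ^ 4 + y ^ 4 := by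
  nlinarith [mul_nonneg (sq_nonneg (x - y)) (sq_nonneg (x + y)),
    mul_nonneg (sq_nonneg (x - y)) (sq_nonneg x)]

private lemma integrable_of_four {Ω : Type} [MeasurableSpace Ω] {μ : Measure Ω}
    [IsProbabilityMeasure μ] {U : Ω → ℝ} (hUm : Measurable U)
    (hU4 : Integrable (fun ω => |U ω| ^ 4) μ) :
    Integrable U μ := by
  refine Integrable.mono' ((hU4.add (integrable_const 3)).div_const 4)
    hUm.aestronglyMeasurable (Filter.Eventually.of_forall fun ω => ?_)
  simp only [Pi.add_apply, Pi.div_apply]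
  rw [Real.norm_eq_abs]
  have ha : (0 : ℝ) ≤ |U ω| := abs_nonneg _
  nlinarith [sq_nonneg (|U ω| - 1), sq_nonneg (|U ω| + 1), sq_nonneg (|U ω| ^ 2 - 1)]

private lemma integrable_sq_of_four {Ω : Type} [MeasurableSpace Ω] {μ : Measure Ω}
    [IsProbabilityMeasure μ] {U : Ω → ℝ} (hUm : Measurable U)
    (hU4 : Integrable (fun ω => |U ω| ^ 4) μ) :
    Integrable (fun ω => (U ω) ^ 2) μ := by
  refine Integrable.mono' ((hU4.add (integrable_const 1)).div_const 2)
    ((hUm.pow_const 2).aestronglyMeasurable) (Filter.Eventually.of_forall fun ω => ?_)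
  simp only [Pi.add_apply, Pi.div_apply]
  rw [Real.norm_eq_abs, abs_of_nonneg (sq_nonneg _)]
  have h2 : (U ω) ^ 2 = |U ω| ^ 2 := (sq_abs _).symm
  nlinarith [sq_nonneg (|U ω| ^ 2 - 1)]

private lemma integrable_cube_of_four {Ω : Type} [MeasurableSpace Ω] {μ : Measure Ω}
    [IsProbabilityMeasure μ] {U : Ω → ℝ} (hUm : Measurable U)
    (hU4 : Integrable (fun ω => |U ω| ^ 4) μ) :
    Integrable (fun ω => |U ω| ^ 3) μ := by
  refine Integrable.mono' (((hU4.const_mul 3).add (integrable_const 1)).div_const 4)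
    ((hUm.abs.pow_const 3).aestronglyMeasurable) (Filter.Eventually.of_forall fun ω => ?_)
  simp only [Pi.add_apply, Pi.div_apply]
  rw [Real.norm_eq_abs, abs_of_nonneg (by positivity)]
  nlinarith [young34 (abs_nonneg (U ω)) (by norm_num : (0:ℝ) ≤ 1)]

private lemma integrable_cube_mul {Ω : Type} [MeasurableSpace Ω] {μ : Measure Ω}
    [IsProbabilityMeasure μ] {U V : Ω → ℝ} (hUm : Measurable U) (hVm : Measurable V)
    (hU4 : Integrable (fun ω => |U ω| ^ 4) μ) (hV4 : Integrable (fun ω => |V ω| ^ 4) μ) :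
    Integrable (fun ω => |U ω| ^ 3 * |V ω|) μ := by
  refine Integrable.mono' (((hU4.const_mul 3).add hV4).div_const 4)
    (((hUm.abs.pow_const 3).mul hVm.abs).aestronglyMeasurable)
    (Filter.Eventually.of_forall fun ω => ?_)
  simp only [Pi.add_apply, Pi.div_apply]
  rw [Real.norm_eq_abs, abs_of_nonneg (by positivity)]
  nlinarith [young34 (abs_nonneg (U ω)) (abs_nonneg (V ω))]

private lemma integrable_mul_of_four {Ω : Type} [MeasurableSpace Ω] {μ : Measure Ω}
    [IsProbabilityMeasure μ] {U V : Ω → ℝ} (hUm : Measurable U) (hVm : Measurable V)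
    (hU4 : Integrable (fun ω => |U ω| ^ 4) μ) (hV4 : Integrable (fun ω => |V ω| ^ 4) μ) :
    Integrable (fun ω => U ω * V ω) μ := by
  refine Integrable.mono' (((hU4.add hV4).add (integrable_const 2)).div_const 4)
    ((hUm.mul hVm).aestronglyMeasurable) (Filter.Eventually.of_forall fun ω => ?_)
  simp only [Pi.add_apply, Pi.div_apply]
  rw [Real.norm_eq_abs, abs_mul]
  have ha : (0:ℝ) ≤ |U ω| := abs_nonneg _
  have hb : (0:ℝ) ≤ |V ω| := abs_nonneg _
  nlinarith [sq_nonneg (|U ω| - |V ω|), sq_nonneg (|U ω| ^ 2 - 1), sq_nonneg (|V ω| ^ 2 - 1)]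

private lemma first_moment_le {Ω : Type} [MeasurableSpace Ω] {μ : Measure Ω}
    [IsProbabilityMeasure μ] {U : Ω → ℝ} (hUm : Measurable U)
    (hU4 : Integrable (fun ω => |U ω| ^ 4) μ) {σ : ℝ} (hσ : 0 < σ)
    (hvar : (∫ ω, (U ω) ^ 2 ∂μ) = σ ^ 2) :
    (∫ ω, |U ω| ∂μ) ≤ σ := by
  have hIU : Integrable (fun ω => |U ω|) μ := (integrable_of_four hUm hU4).abs
  have hIU2 : Integrable (fun ω => (U ω) ^ 2) μ := integrable_sq_of_four hUm hU4
  have key : σ * (∫ ω, |U ω| ∂μ) ≤ σ * σ := by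
    calc σ * (∫ ω, |U ω| ∂μ) = ∫ ω, σ * |U ω| ∂μ := (integral_const_mul σ _).symm
      _ ≤ ∫ ω, ((U ω) ^ 2 + σ ^ 2) / 2 ∂μ := by
          refine integral_mono (hIU.const_mul σ) ((hIU2.add (integrable_const _)).div_const 2)
            fun ω => ?_
          have h2 : (U ω) ^ 2 = |U ω| ^ 2 := (sq_abs _).symm
          nlinarith [sq_nonneg (|U ω| - σ)]
      _ = ((∫ ω, (U ω) ^ 2 ∂μ) + σ ^ 2) / 2 := by
          rw [integral_div, integral_add hIU2 (integrable_const _), integral_const]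
          simp
      _ = σ * σ := by rw [hvar]; ring
  exact le_of_mul_le_mul_left key hσ

private lemma third_moment_le {Ω : Type} [MeasurableSpace Ω] {μ : Measure Ω}
    [IsProbabilityMeasure μ] {U : Ω → ℝ} (hUm : Measurable U)
    (hU4 : Integrable (fun ω => |U ω| ^ 4) μ) {σ C : ℝ} (hσ : 0 < σ) (hC : 1 ≤ C)
    (h4 : (∫ ω, |U ω| ^ 4 ∂μ) ≤ C ^ 4 * σ ^ 4) :
    (∫ ω, |U ω| ^ 3 ∂μ) ≤ C ^ 4 * σ ^ 3 := by
  have hIU3 : Integrable (fun ω => |U ω| ^ 3) μ := integrable_cube_of_four hUm hU4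
  have key : σ * (∫ ω, |U ω| ^ 3 ∂μ) ≤ σ * (C ^ 4 * σ ^ 3) := by
    calc σ * (∫ ω, |U ω| ^ 3 ∂μ) = ∫ ω, σ * |U ω| ^ 3 ∂μ := (integral_const_mul σ _).symm
      _ ≤ ∫ ω, (3 * |U ω| ^ 4 + σ ^ 4) / 4 ∂μ := by
          refine integral_mono (hIU3.const_mul σ)
            (((hU4.const_mul 3).add (integrable_const _)).div_const 4) fun ω => ?_
          nlinarith [young34 (abs_nonneg (U ω)) hσ.le]
      _ = (3 * (∫ ω, |U ω| ^ 4 ∂μ) + σ ^ 4) / 4 := by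
          rw [integral_div, integral_add (hU4.const_mul 3) (integrable_const _),
            integral_const_mul, integral_const]
          simp
      _ ≤ (3 * (C ^ 4 * σ ^ 4) + σ ^ 4) / 4 := by linarith
      _ ≤ σ * (C ^ 4 * σ ^ 3) := by
          nlinarith [pow_le_pow_left₀ (by norm_num : (0:ℝ) ≤ 1) hC 4, pow_pos hσ 4]
  exact le_of_mul_le_mul_left key hσ

private lemma cross_moment_le {Ω : Type} [MeasurableSpace Ω] {μ : Measure Ω}
    [IsProbabilityMeasure μ] {U V : Ω → ℝ} (hUm : Measurable U) (hVm : Measurable V)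
    (hU4 : Integrable (fun ω => |U ω| ^ 4) μ) (hV4 : Integrable (fun ω => |V ω| ^ 4) μ)
    {σX σY C : ℝ} (hσX : 0 < σX) (hσY : 0 < σY) (hC : 1 ≤ C)
    (h4U : (∫ ω, |U ω| ^ 4 ∂μ) ≤ C ^ 4 * σX ^ 4)
    (h4V : (∫ ω, |V ω| ^ 4 ∂μ) ≤ C ^ 4 * σY ^ 4) :
    (∫ ω, |U ω| ^ 3 * |V ω| ∂μ) ≤ C ^ 4 * σX ^ 3 * σY := by
  have hI : Integrable (fun ω => |U ω| ^ 3 * |V ω|) μ := integrable_cube_mul hUm hVm hU4 hV4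
  have hpos : (0:ℝ) < σX * σY ^ 3 := by positivity
  have key : (σX * σY ^ 3) * (∫ ω, |U ω| ^ 3 * |V ω| ∂μ)
      ≤ (σX * σY ^ 3) * (C ^ 4 * σX ^ 3 * σY) := by
    calc (σX * σY ^ 3) * (∫ ω, |U ω| ^ 3 * |V ω| ∂μ)
        = ∫ ω, (σX * σY ^ 3) * (|U ω| ^ 3 * |V ω|) ∂μ := (integral_const_mul _ _).symm
      _ ≤ ∫ ω, (3 * σY ^ 4 * |U ω| ^ 4 + σX ^ 4 * |V ω| ^ 4) / 4 ∂μ := by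
          refine integral_mono (hI.const_mul _)
            (((hU4.const_mul (3 * σY ^ 4)).add (hV4.const_mul (σX ^ 4))).div_const 4)
            fun ω => ?_
          nlinarith [young34 (mul_nonneg (abs_nonneg (U ω)) hσY.le)
            (mul_nonneg (abs_nonneg (V ω)) hσX.le)]
      _ = (3 * σY ^ 4 * (∫ ω, |U ω| ^ 4 ∂μ) + σX ^ 4 * (∫ ω, |V ω| ^ 4 ∂μ)) / 4 := by
          rw [integral_div, integral_add (hU4.const_mul _) (hV4.const_mul _),
            integral_const_mul, integral_const_mul]
      _ ≤ (3 * σY ^ 4 * (C ^ 4 * σX ^ 4) + σX ^ 4 * (C ^ 4 * σY ^ 4)) / 4 := by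
          have h1 : (0:ℝ) ≤ 3 * σY ^ 4 := by positivity
          have h2 : (0:ℝ) ≤ σX ^ 4 := by positivity
          gcongr
      _ = (σX * σY ^ 3) * (C ^ 4 * σX ^ 3 * σY) := by ring
  exact le_of_mul_le_mul_left key hpos

private lemma key_lemma {Ω : Type} [MeasurableSpace Ω] (μ : Measure Ω) [IsProbabilityMeasure μ]
    (U V : Ω → ℝ) (hUm : Measurable U) (hVm : Measurable V)
    (σX σY C : ℝ) (n : ℕ) (hn : 0 < n) (hσX : 0 < σX) (hσY : 0 < σY) (hC : 1 ≤ C)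
    (hU4 : Integrable (fun ω => |U ω| ^ 4) μ) (hV4 : Integrable (fun ω => |V ω| ^ 4) μ)
    (hUmean : (∫ ω, U ω ∂μ) = 0) (hVmean : (∫ ω, V ω ∂μ) = 0)
    (hUvar : (∫ ω, (U ω) ^ 2 ∂μ) = σX ^ 2) (hVvar : (∫ ω, (V ω) ^ 2 ∂μ) = σY ^ 2)
    (h4U : (∫ ω, |U ω| ^ 4 ∂μ) ≤ C ^ 4 * σX ^ 4)
    (h4V : (∫ ω, |V ω| ^ 4 ∂μ) ≤ C ^ 4 * σY ^ 4) :
    |((∫ ω, phi (σX * Real.sqrt n) (U ω) * phi (σY * Real.sqrt n) (V ω) ∂μ) -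
        (∫ ω, phi (σX * Real.sqrt n) (U ω) ∂μ) * (∫ ω, phi (σY * Real.sqrt n) (V ω) ∂μ)) -
      (∫ ω, U ω * V ω ∂μ)| ≤ 6 * C ^ 4 * σX * σY / n := by
  have hnR : (0:ℝ) < n := Nat.cast_pos.mpr hn
  set tX : ℝ := σX * Real.sqrt n with htXdef
  set tY : ℝ := σY * Real.sqrt n with htYdef
  have hsq : (0:ℝ) < Real.sqrt n := Real.sqrt_pos.mpr hnR
  have htX : 0 < tX := mul_pos hσX hsq
  have htY : 0 < tY := mul_pos hσY hsq
  have htX2 : tX ^ 2 = σX ^ 2 * n := by rw [htXdef, mul_pow, Real.sq_sqrt hnR.le]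
  have htY2 : tY ^ 2 = σY ^ 2 * n := by rw [htYdef, mul_pow, Real.sq_sqrt hnR.le]
  -- integrability facts
  have hIU : Integrable U μ := integrable_of_four hUm hU4
  have hIV : Integrable V μ := integrable_of_four hVm hV4
  have hIU3 : Integrable (fun ω => |U ω| ^ 3) μ := integrable_cube_of_four hUm hU4
  have hIU3V : Integrable (fun ω => |U ω| ^ 3 * |V ω|) μ := integrable_cube_mul hUm hVm hU4 hV4
  have hIV3U : Integrable (fun ω => |V ω| ^ 3 * |U ω|) μ := integrable_cube_mul hVm hUm hV4 hU4
  have hIUV : Integrable (fun ω => U ω * V ω) μ := integrable_mul_of_four hUm hVm hU4 hV4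
  have hφUm : Measurable (fun ω => phi tX (U ω)) := (measurable_phi tX).comp hUm
  have hφVm : Measurable (fun ω => phi tY (V ω)) := (measurable_phi tY).comp hVm
  have hIφU : Integrable (fun ω => phi tX (U ω)) μ := by
    refine Integrable.mono' hIU.abs hφUm.aestronglyMeasurable
      (Filter.Eventually.of_forall fun ω => ?_)
    rw [Real.norm_eq_abs]
    exact abs_phi_le_abs tX (U ω) htX.le
  have hIφV : Integrable (fun ω => phi tY (V ω)) μ := by
    refine Integrable.mono' hIV.abs hφVm.aestronglyMeasurable
      (Filter.Eventually.of_forall fun ω => ?_)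
    rw [Real.norm_eq_abs]
    exact abs_phi_le_abs tY (V ω) htY.le
  have hIφUV : Integrable (fun ω => phi tX (U ω) * phi tY (V ω)) μ := by
    refine Integrable.mono' hIUV.abs ((hφUm.mul hφVm).aestronglyMeasurable)
      (Filter.Eventually.of_forall fun ω => ?_)
    rw [Real.norm_eq_abs, abs_mul, abs_mul]
    exact mul_le_mul (abs_phi_le_abs tX (U ω) htX.le) (abs_phi_le_abs tY (V ω) htY.le)
      (abs_nonneg _) (abs_nonneg _)
  -- bound on |∫ φU|
  have hB : |∫ ω, phi tX (U ω) ∂μ| ≤ 2 * C ^ 4 * σX / n := by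
    have heq : (∫ ω, phi tX (U ω) ∂μ) = ∫ ω, (phi tX (U ω) - U ω) ∂μ := by
      rw [integral_sub hIφU hIU, hUmean, sub_zero]
    rw [heq]
    calc |∫ ω, (phi tX (U ω) - U ω) ∂μ| ≤ ∫ ω, |phi tX (U ω) - U ω| ∂μ := by
          simpa [Real.norm_eq_abs] using
            norm_integral_le_integral_norm (μ := μ) (fun ω => phi tX (U ω) - U ω)
      _ ≤ ∫ ω, (2 / tX ^ 2) * |U ω| ^ 3 ∂μ := by
          exact integral_mono (hIφU.sub hIU).abs (hIU3.const_mul _)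
            fun ω => abs_phi_sub_le tX (U ω) htX
      _ = (2 / tX ^ 2) * ∫ ω, |U ω| ^ 3 ∂μ := integral_const_mul _ _
      _ ≤ (2 / tX ^ 2) * (C ^ 4 * σX ^ 3) := by
          have := third_moment_le hUm hU4 hσX hC h4U
          have hnn : (0:ℝ) ≤ 2 / tX ^ 2 := by positivity
          exact mul_le_mul_of_nonneg_left this hnn
      _ = 2 * C ^ 4 * σX / n := by
          rw [htX2]; field_simp
  -- bound on |∫ φV|
  have hB' : |∫ ω, phi tY (V ω) ∂μ| ≤ σY := by
    calc |∫ ω, phi tY (V ω) ∂μ| ≤ ∫ ω, |phi tY (V ω)| ∂μ := by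
          simpa [Real.norm_eq_abs] using
            norm_integral_le_integral_norm (μ := μ) (fun ω => phi tY (V ω))
      _ ≤ ∫ ω, |V ω| ∂μ :=
          integral_mono hIφV.abs hIV.abs fun ω => abs_phi_le_abs tY (V ω) htY.le
      _ ≤ σY := first_moment_le hVm hV4 hσY hVvar
  -- bound on |∫ φUφV - ∫ UV|
  have hAD : |(∫ ω, phi tX (U ω) * phi tY (V ω) ∂μ) - (∫ ω, U ω * V ω ∂μ)|
      ≤ 4 * C ^ 4 * σX * σY / n := by
    rw [← integral_sub hIφUV hIUV]
    calc |∫ ω, (phi tX (U ω) * phi tY (V ω) - U ω * V ω) ∂μ|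
        ≤ ∫ ω, |phi tX (U ω) * phi tY (V ω) - U ω * V ω| ∂μ := by
          simpa [Real.norm_eq_abs] using norm_integral_le_integral_norm (μ := μ)
            (fun ω => phi tX (U ω) * phi tY (V ω) - U ω * V ω)
      _ ≤ ∫ ω, ((2 / tX ^ 2) * (|U ω| ^ 3 * |V ω|) + (2 / tY ^ 2) * (|V ω| ^ 3 * |U ω|)) ∂μ := by
          refine integral_mono (hIφUV.sub hIUV).abs
            ((hIU3V.const_mul _).add (hIV3U.const_mul _)) fun ω => ?_
          have e : phi tX (U ω) * phi tY (V ω) - U ω * V ω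
              = (phi tX (U ω) - U ω) * phi tY (V ω) + U ω * (phi tY (V ω) - V ω) := by ring
          have h1 : |(phi tX (U ω) - U ω) * phi tY (V ω)|
              ≤ ((2 / tX ^ 2) * |U ω| ^ 3) * |V ω| := by
            rw [abs_mul]
            exact mul_le_mul (abs_phi_sub_le tX (U ω) htX) (abs_phi_le_abs tY (V ω) htY.le)
              (abs_nonneg _) (by positivity)
          have h2 : |U ω * (phi tY (V ω) - V ω)| ≤ |U ω| * ((2 / tY ^ 2) * |V ω| ^ 3) := by
            rw [abs_mul]
            exact mul_le_mul_of_nonneg_left (abs_phi_sub_le tY (V ω) htY) (abs_nonneg _)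
          calc |phi tX (U ω) * phi tY (V ω) - U ω * V ω|
              ≤ |(phi tX (U ω) - U ω) * phi tY (V ω)| + |U ω * (phi tY (V ω) - V ω)| := by
                rw [e]; exact abs_add_le _ _
            _ ≤ ((2 / tX ^ 2) * |U ω| ^ 3) * |V ω| + |U ω| * ((2 / tY ^ 2) * |V ω| ^ 3) := by
                linarith
            _ = (2 / tX ^ 2) * (|U ω| ^ 3 * |V ω|) + (2 / tY ^ 2) * (|V ω| ^ 3 * |U ω|) := by
                ring
      _ = (2 / tX ^ 2) * (∫ ω, |U ω| ^ 3 * |V ω| ∂μ)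
            + (2 / tY ^ 2) * (∫ ω, |V ω| ^ 3 * |U ω| ∂μ) := by
          rw [integral_add (hIU3V.const_mul _) (hIV3U.const_mul _), integral_const_mul,
            integral_const_mul]
      _ ≤ (2 / tX ^ 2) * (C ^ 4 * σX ^ 3 * σY) + (2 / tY ^ 2) * (C ^ 4 * σY ^ 3 * σX) := by
          have hc1 := cross_moment_le hUm hVm hU4 hV4 hσX hσY hC h4U h4V
          have hc2 := cross_moment_le hVm hUm hV4 hU4 hσY hσX hC h4V h4U
          have hn1 : (0:ℝ) ≤ 2 / tX ^ 2 := by positivity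
          have hn2 : (0:ℝ) ≤ 2 / tY ^ 2 := by positivity
          exact add_le_add (mul_le_mul_of_nonneg_left hc1 hn1)
            (mul_le_mul_of_nonneg_left hc2 hn2)
      _ = 4 * C ^ 4 * σX * σY / n := by
          rw [htX2, htY2]; field_simp; ring
  -- conclusion
  set A := ∫ ω, phi tX (U ω) * phi tY (V ω) ∂μ
  set B := ∫ ω, phi tX (U ω) ∂μ
  set B2 := ∫ ω, phi tY (V ω) ∂μ
  set D := ∫ ω, U ω * V ω ∂μ
  have habs : |A - B * B2 - D| ≤ |A - D| + |B| * |B2| := by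
    have e : A - B * B2 - D = (A - D) + -(B * B2) := by ring
    rw [e]
    refine (abs_add_le _ _).trans ?_
    rw [abs_neg, abs_mul]
  have hprod : |B| * |B2| ≤ (2 * C ^ 4 * σX / n) * σY :=
    mul_le_mul hB hB' (abs_nonneg _) (by positivity)
  have hfinal : 4 * C ^ 4 * σX * σY / n + (2 * C ^ 4 * σX / n) * σY
      = 6 * C ^ 4 * σX * σY / n := by field_simp; ring
  linarith

/-- Covariance of truncated variables: there is an absolute constant `c > 0` such that for any
random variables `X, Y` with means `mX, mY`, standard deviations `σX, σY > 0` and fourth-moment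
bounds `‖X − mX‖_{L⁴} ≤ C σX`, `‖Y − mY‖_{L⁴} ≤ C σY`, the truncations at `tX = σX√n`,
`tY = σY√n` satisfy `|cov(φ_{tX}(X−mX), φ_{tY}(Y−mY)) − cov(X,Y)| ≤ c C⁴ σX σY / n`. -/
theorem stmt12 : ∃ c : ℝ, 0 < c ∧
    ∀ (Ω : Type) [MeasurableSpace Ω] (μ : Measure Ω) [IsProbabilityMeasure μ]
      (X Y : Ω → ℝ), Measurable X → Measurable Y →
      ∀ (mX mY σX σY C : ℝ) (n : ℕ), 0 < n → 0 < σX → 0 < σY → 1 ≤ C →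
      Integrable (fun ω => |X ω - mX| ^ 4) μ →
      Integrable (fun ω => |Y ω - mY| ^ 4) μ →
      (∫ ω, X ω ∂μ) = mX → (∫ ω, Y ω ∂μ) = mY →
      (∫ ω, (X ω - mX) ^ 2 ∂μ) = σX ^ 2 → (∫ ω, (Y ω - mY) ^ 2 ∂μ) = σY ^ 2 →
      (∫ ω, |X ω - mX| ^ 4 ∂μ) ^ ((1 : ℝ) / 4) ≤ C * σX →
      (∫ ω, |Y ω - mY| ^ 4 ∂μ) ^ ((1 : ℝ) / 4) ≤ C * σY →
      |((∫ ω, (Real.sign (X ω - mX) * min |X ω - mX| (σX * Real.sqrt n)) *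
              (Real.sign (Y ω - mY) * min |Y ω - mY| (σY * Real.sqrt n)) ∂μ) -
          (∫ ω, Real.sign (X ω - mX) * min |X ω - mX| (σX * Real.sqrt n) ∂μ) *
            (∫ ω, Real.sign (Y ω - mY) * min |Y ω - mY| (σY * Real.sqrt n) ∂μ)) -
        ∫ ω, (X ω - mX) * (Y ω - mY) ∂μ| ≤ c * C ^ 4 * σX * σY / n := by
  refine ⟨6, by norm_num, ?_⟩
  intro Ω _ μ _ X Y hXm hYm mX mY σX σY C n hn hσX hσY hC hU4 hV4 hmX hmY hvX hvY h4X h4Y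
  have hUm : Measurable (fun ω => X ω - mX) := hXm.sub measurable_const
  have hVm : Measurable (fun ω => Y ω - mY) := hYm.sub measurable_const
  -- fourth moment bounds
  have hnnX : (0:ℝ) ≤ ∫ ω, |X ω - mX| ^ 4 ∂μ := integral_nonneg fun ω => by positivity
  have hnnY : (0:ℝ) ≤ ∫ ω, |Y ω - mY| ^ 4 ∂μ := integral_nonneg fun ω => by positivity
  have h4U : (∫ ω, |X ω - mX| ^ 4 ∂μ) ≤ C ^ 4 * σX ^ 4 := by
    have e : ((∫ ω, |X ω - mX| ^ 4 ∂μ) ^ ((1:ℝ)/4)) ^ (4:ℕ) = ∫ ω, |X ω - mX| ^ 4 ∂μ := by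
      rw [← Real.rpow_natCast ((∫ ω, |X ω - mX| ^ 4 ∂μ) ^ ((1:ℝ)/4)) 4,
        ← Real.rpow_mul hnnX]
      norm_num
    calc (∫ ω, |X ω - mX| ^ 4 ∂μ) = ((∫ ω, |X ω - mX| ^ 4 ∂μ) ^ ((1:ℝ)/4)) ^ (4:ℕ) := e.symm
      _ ≤ (C * σX) ^ (4:ℕ) := pow_le_pow_left₀ (Real.rpow_nonneg hnnX _) h4X 4
      _ = C ^ 4 * σX ^ 4 := mul_pow _ _ _
  have h4V : (∫ ω, |Y ω - mY| ^ 4 ∂μ) ≤ C ^ 4 * σY ^ 4 := by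
    have e : ((∫ ω, |Y ω - mY| ^ 4 ∂μ) ^ ((1:ℝ)/4)) ^ (4:ℕ) = ∫ ω, |Y ω - mY| ^ 4 ∂μ := by
      rw [← Real.rpow_natCast ((∫ ω, |Y ω - mY| ^ 4 ∂μ) ^ ((1:ℝ)/4)) 4,
        ← Real.rpow_mul hnnY]
      norm_num
    calc (∫ ω, |Y ω - mY| ^ 4 ∂μ) = ((∫ ω, |Y ω - mY| ^ 4 ∂μ) ^ ((1:ℝ)/4)) ^ (4:ℕ) := e.symm
      _ ≤ (C * σY) ^ (4:ℕ) := pow_le_pow_left₀ (Real.rpow_nonneg hnnY _) h4Y 4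
      _ = C ^ 4 * σY ^ 4 := mul_pow _ _ _
  -- centered means
  have hXint : Integrable X μ := by
    have e : X = fun ω => (X ω - mX) + mX := by funext ω; ring
    rw [e]
    exact (integrable_of_four hUm hU4).add (integrable_const mX)
  have hYint : Integrable Y μ := by
    have e : Y = fun ω => (Y ω - mY) + mY := by funext ω; ring
    rw [e]
    exact (integrable_of_four hVm hV4).add (integrable_const mY)
  have hUmean : (∫ ω, (X ω - mX) ∂μ) = 0 := by
    rw [integral_sub hXint (integrable_const mX), hmX, integral_const]
    simp
  have hVmean : (∫ ω, (Y ω - mY) ∂μ) = 0 := by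
    rw [integral_sub hYint (integrable_const mY), hmY, integral_const]
    simp
  exact key_lemma μ (fun ω => X ω - mX) (fun ω => Y ω - mY) hUm hVm σX σY C n hn hσX hσY hC
    hU4 hV4 hUmean hVmean hvX hvY h4U h4V
end
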